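/- arXiv:1611.05674 — 3 statements merged into one kernel-verified Lean document; each statement's English description precedes it below -/
import Mathlib

section
/- With notation as in the definition of S^t_{m,n}(q): if ξ^{t(s-1)} = q^l and ξ^{t(s'-1)} = q^{l'}, then m divides (l' + l·s') - (l + l'·s). -/
/-- If `ξ^{t(s-1)} = q^l` and `ξ^{t(s'-1)} = q^{l'}`, with `q` a primitive `m`-th
root of unity, then `m ∣ (l' + l·s') - (l + l'·s)`. -/
theorem m_dvd_defining_relation {K : Type*} [Field K] {n m : ℕ} (hn : 0 < n) (hm : 0 < m)
    {ξ q : K} (hξn : ξ ^ n = 1) (hgen : ∀ ω : K, ω ^ n = 1 → ∃ k : ℕ, ω = ξ ^ k)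
    (hq : IsPrimitiveRoot q m)
    {t l l' s s' : ℤ} (h : ξ ^ (t * (s - 1)) = q ^ l) (h' : ξ ^ (t * (s' - 1)) = q ^ l') :
    (m : ℤ) ∣ (l' + l * s') - (l + l' * s) := by
  have key : q ^ (l * (s' - 1)) = q ^ (l' * (s - 1)) := by
    have e1 : (ξ ^ (t * (s - 1))) ^ (s' - 1) = q ^ (l * (s' - 1)) := by
      rw [h, ← zpow_mul]
    have e2 : (ξ ^ (t * (s' - 1))) ^ (s - 1) = q ^ (l' * (s - 1)) := by
      rw [h', ← zpow_mul]
    rw [← e1, ← e2, ← zpow_mul, ← zpow_mul]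
    ring_nf
  have hq0 : q ≠ 0 := hq.ne_zero hm.ne'
  have : q ^ (l * (s' - 1) - l' * (s - 1)) = 1 := by
    rw [zpow_sub₀ hq0, key, div_self (zpow_ne_zero _ hq0)]
  have hdvd : (m : ℤ) ∣ (l * (s' - 1) - l' * (s - 1)) :=
    (hq.zpow_eq_one_iff_dvd _).mp this
  have : (l' + l * s') - (l + l' * s) = l * (s' - 1) - l' * (s - 1) := by ring
  rw [this]
  exact hdvd
end

section
/- Define a relation on ℤ/ν (ν = order of ξ in K^×, q a primitive m-th root of unity, d = gcd(m,ν)): t ~ t' iff there exist l ∈ {0,...,m-1} and s ∈ {0,...,n-1} with gcd(s,n) = 1 and ξ^{s·t' - t} = q^l. Then ~ is an equivalence relation. -/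
/-!
Since `ξ` is a unit with `ξ ^ n = 1`, the relation says that `ξ ^ (s * t' - t)` lies in the
subgroup of `m`-th roots of unity for some `s` coprime to `n`, and `s` only matters modulo `n`.
Reflexivity takes `s = 1`; symmetry raises the witness to the power `-s'`, where `s * s' ≡ 1`
modulo `n`; transitivity composes witnesses through
`s₁ * s₂ * t'' - t = s₁ * (s₂ * t'' - t') + (s₁ * t' - t)`.
-/

section

variable {G : Type*} [Group G] {x : G} {n : ℕ}

theorem zpow_eq_zpow_of_modEq (hx : x ^ n = 1) {a b : ℤ} (h : a ≡ b [ZMOD n]) :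
    x ^ a = x ^ b := by
  rw [zpow_eq_zpow_emod' a hx, zpow_eq_zpow_emod' b hx, h]

theorem exists_lt_coprime_zpow_mem (hn : 0 < n) (hx : x ^ n = 1) {H : Subgroup G} {s : ℕ}
    {t t' : ℤ} (hs : s.Coprime n) (h : x ^ ((s : ℤ) * t' - t) ∈ H) :
    ∃ r < n, r.Coprime n ∧ x ^ ((r : ℤ) * t' - t) ∈ H := by
  refine ⟨s % n, Nat.mod_lt s hn, (ZMod.coprime_mod_iff_coprime s n).2 hs, ?_⟩
  have hmod : ((s % n : ℕ) : ℤ) * t' - t ≡ s * t' - t [ZMOD n] := by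
    push_cast
    exact ((Int.mod_modEq _ _).mul_right t').sub_right t
  rwa [zpow_eq_zpow_of_modEq hx hmod]

theorem equivalence_exists_coprime_zpow_mem (hn : 0 < n) (hx : x ^ n = 1) (H : Subgroup G) :
    Equivalence fun t t' : ℤ => ∃ s < n, s.Coprime n ∧ x ^ ((s : ℤ) * t' - t) ∈ H where
  refl t := exists_lt_coprime_zpow_mem hn hx (Nat.coprime_one_left n) (by simp [H.one_mem])
  symm := by
    rintro t t' ⟨s, -, hs, h⟩
    obtain ⟨s', -, hss'⟩ := Nat.exists_mul_mod_eq_of_coprime 1 hs hn.ne'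
    have hinv : (s * s' : ℤ) ≡ 1 [ZMOD n] := by exact_mod_cast hss'
    have hs' : s'.Coprime n :=
      Nat.Coprime.coprime_mul_left (k := s) (by rw [Nat.Coprime, Nat.ModEq.gcd_eq hss']; simp)
    refine exists_lt_coprime_zpow_mem hn hx hs' ?_
    have hexp : ((s : ℤ) * t' - t) * -s' ≡ s' * t - t' [ZMOD n] := by
      have := (hinv.mul_right t').neg.add_right (s' * t)
      convert this using 1 <;> ring
    rw [← zpow_eq_zpow_of_modEq hx hexp, zpow_mul]
    exact H.zpow_mem h _
  trans := by
    rintro t t' t'' ⟨s₁, -, hs₁, h₁⟩ ⟨s₂, -, hs₂, h₂⟩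
    refine exists_lt_coprime_zpow_mem hn hx (hs₁.mul_left hs₂) ?_
    have hexp : ((s₁ * s₂ : ℕ) : ℤ) * t'' - t = ((s₂ : ℤ) * t'' - t') * s₁ + (s₁ * t' - t) := by
      push_cast
      ring
    rw [hexp, zpow_add, zpow_mul]
    exact H.mul_mem (H.zpow_mem h₂ _) h₁

end

theorem IsPrimitiveRoot.exists_pow_eq_iff {R : Type*} [CommRing R] [IsDomain R] {q y : R}
    {m : ℕ} [NeZero m] (hq : IsPrimitiveRoot q m) :
    (∃ l < m, y = q ^ l) ↔ y ^ m = 1 := by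
  constructor
  · rintro ⟨l, -, rfl⟩
    rw [← pow_mul, mul_comm, pow_mul, hq.pow_eq_one, one_pow]
  · intro hy
    obtain ⟨l, hl, rfl⟩ := hq.eq_pow_of_pow_eq_one hy
    exact ⟨l, hl, rfl⟩

theorem iso_relation_equivalence_general {K : Type*} [Field K] {m n : ℕ}
    (hn : 2 ≤ n) (hm : 2 ≤ m) {ξ q : K} (hq : IsPrimitiveRoot q m)
    (hξn : ξ ^ n = 1) :
    Equivalence (fun t t' : ℤ =>
      ∃ l s : ℕ, l < m ∧ s < n ∧ Nat.Coprime s n ∧ ξ ^ ((s : ℤ) * t' - t) = q ^ l) := by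
  have : NeZero m := ⟨by omega⟩
  lift ξ to Kˣ using IsUnit.of_pow_eq_one hξn (by omega)
  have hξn' : ξ ^ n = 1 := Units.ext (by simpa using hξn)
  have hrel : ∀ t t' : ℤ,
      (∃ l s : ℕ, l < m ∧ s < n ∧ s.Coprime n ∧ (ξ : K) ^ ((s : ℤ) * t' - t) = q ^ l) ↔
        ∃ s < n, s.Coprime n ∧ ξ ^ ((s : ℤ) * t' - t) ∈ rootsOfUnity m K := by
    intro t t'
    simp only [mem_rootsOfUnity', Units.val_zpow_eq_zpow_val, ← hq.exists_pow_eq_iff]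
    grind
  simpa only [hrel] using equivalence_exists_coprime_zpow_mem (by omega) hξn' (rootsOfUnity m K)

/-- The relation `t ~ t'` iff there are `l ∈ {0,…,m-1}` and `s ∈ {0,…,n-1}` with
`gcd(s,n) = 1` and `ξ^{s·t' - t} = q^l` (encoding isomorphism of the Hopf algebras
`T^{ξ^t}_{nm²}(q)`) is an equivalence relation. -/
theorem iso_relation_equivalence {K : Type*} [Field K] {m n ν : ℕ}
    (hn : 2 ≤ n) (hm : 2 ≤ m) {ξ q : K} (hq : IsPrimitiveRoot q m)
    (hξn : ξ ^ n = 1) (hord : orderOf ξ = ν) (hνn : ν ∣ n)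
    (hgen : ∀ ω : K, ω ^ n = 1 → ∃ k : ℕ, ω = ξ ^ k) :
    Equivalence (fun t t' : ℤ =>
      ∃ l s : ℕ, l < m ∧ s < n ∧ Nat.Coprime s n ∧ ξ ^ ((s : ℤ) * t' - t) = q ^ l) :=
  iso_relation_equivalence_general hn hm hq hξn
end

section
/- Let K be a field, q ∈ K a primitive m-th root of unity, ξ a generator of U_n(K) of order ν, t an integer. Suppose s, τ, μ ∈ ℤ with sτ + nμ = 1 and ξ^{st'-t} = q^l where m ∣ nl. Write τ = αn + τ₁ with 0 ≤ τ₁ < n and lτ = βm + τ₂ with 0 ≤ τ₂ < m. Then ξ^{τ₁·t - t'} = q^{m - τ₂}. -/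
private lemma zpow_add_mul_cancel {K : Type*} [Field K] {x : K} (hx : x ≠ 0)
    {c : ℤ} (hc : x ^ c = 1) (a k : ℤ) : x ^ (a + c * k) = x ^ a := by
  rw [zpow_add₀ hx, zpow_mul, hc, one_zpow, mul_one]

/-- The key computation in Theorem 3.4: if `ξ^{st'-t} = q^l`, `m ∣ nl`,
`sτ + nμ = 1`, `τ = αn + τ₁` with `0 ≤ τ₁ < n`, and `lτ = βm + τ₂` with
`0 ≤ τ₂ < m`, then `ξ^{τ₁·t - t'} = q^{m - τ₂}`. -/
theorem inverse_isomorphism_relation {K : Type*} [Field K] {n m : ℕ}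
    (hn : 2 ≤ n) (hm : 2 ≤ m) {ξ q : K} (hξn : ξ ^ n = 1)
    (hq : IsPrimitiveRoot q m)
    {t t' s l τ μ α β τ₁ τ₂ : ℤ}
    (h : ξ ^ (s * t' - t) = q ^ l) (hml : (m : ℤ) ∣ n * l)
    (h1 : s * τ + n * μ = 1) (h2 : τ = α * n + τ₁) (hτ₁ : 0 ≤ τ₁) (hτ₁' : τ₁ < n)
    (h3 : l * τ = β * m + τ₂) (hτ₂ : 0 ≤ τ₂) (hτ₂' : τ₂ < m) :
    ξ ^ (τ₁ * t - t') = q ^ ((m : ℤ) - τ₂) := by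
  have hξ0 : ξ ≠ 0 := by
    intro h0; rw [h0, zero_pow (by omega)] at hξn; exact zero_ne_one hξn
  have hq0 : q ≠ 0 := hq.ne_zero (by omega)
  have hξz : ξ ^ (n : ℤ) = 1 := by rw [zpow_natCast, hξn]
  have hqz : q ^ (m : ℤ) = 1 := by rw [zpow_natCast, hq.pow_eq_one]
  -- raise h to the τ power
  have key : ξ ^ ((s * t' - t) * τ) = q ^ (l * τ) := by
    rw [zpow_mul, h, ← zpow_mul, mul_comm]
  have hL : ξ ^ ((s * t' - t) * τ) = ξ ^ (t' - τ * t) := by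
    have : (s * t' - t) * τ = (t' - τ * t) + (n : ℤ) * (-(μ * t')) := by
      linear_combination t' * h1
    rw [this, zpow_add_mul_cancel hξ0 hξz]
  have hR : q ^ (l * τ) = q ^ τ₂ := by
    have : l * τ = τ₂ + (m : ℤ) * β := by linarith
    rw [this, zpow_add_mul_cancel hq0 hqz]
  have h4 : ξ ^ (t' - τ * t) = q ^ τ₂ := by rw [← hL, key, hR]
  have h5 : ξ ^ (τ * t - t') = q ^ (-τ₂) := by
    have := congrArg (·⁻¹) h4
    simpa [← zpow_neg, neg_sub] using this
  have h6 : τ₁ * t - t' = (τ * t - t') + (n : ℤ) * (-(α * t)) := by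
    rw [h2]; ring
  rw [h6, zpow_add_mul_cancel hξ0 hξz, h5]
  have : (m : ℤ) - τ₂ = -τ₂ + (m : ℤ) * 1 := by ring
  rw [this, zpow_add_mul_cancel hq0 hqz]
end
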